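/- Let q be a prime power, ψ the canonical additive character of F_q, and X, Y ⊆ F_q finite sets. Then |Σ_{x∈X} Σ_{y∈Y} ψ(xy)|⁸ ≤ q · |X|⁴ · |Y|⁴ · E(X) · E(Y), where E denotes additive energy. -/

import Mathlib

open Finset

/-- The canonical additive character `ψ(x) = e^{2πi Tr(x)/p}` of a finite
field `F` of characteristic `p`. -/
noncomputable def canonChar (p : ℕ) (F : Type*) [Field F] [Fintype F]
    [Algebra (ZMod p) F] (x : F) : ℂ :=
  Complex.exp (2 * Real.pi * Complex.I *
    ((Algebra.trace (ZMod p) F x).val : ℂ) / p)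

/-- Additive energy of a finite subset of `F`. -/
def addEnergy {F : Type*} [AddCommGroup F] [DecidableEq F] (Z : Finset F) : ℕ :=
  (((Z ×ˢ Z) ×ˢ (Z ×ˢ Z)).filter (fun z => z.1.1 + z.2.1 = z.1.2 + z.2.2)).card

/-!
Write `T_Z(d) = ∑_{z ∈ Z} ψ(d z)`, so that the bilinear sum is `S = ∑_{x ∈ X} T_Y(x)`.
Cauchy–Schwarz and expanding `|T_Y(x)|²` give `|S|² ≤ |X| ∑_{y, y' ∈ Y} |T_X(y - y')|`; a second
Cauchy–Schwarz bounds the square of the right-hand side by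
`|Y|² ∑_{x, x', y, y'} ψ((x - x')(y - y'))`. Grouping the pairs `(x, x')` by their difference
turns this last sum into `∑_d r_X(d) |T_Y(d)|²`, where `r_X(d) = #{(x, x') ∈ X² | x - x' = d}`,
and a third Cauchy–Schwarz bounds its square by `∑_d r_X(d)² · ∑_d |T_Y(d)|⁴ = E(X) · q E(Y)`,
the fourth moment being computed by orthogonality of the primitive character `ψ`.
-/

open scoped Combinatorics.Additive

namespace Finset

variable {α : Type*} [AddCommGroup α] [DecidableEq α]

theorem sum_comp_sub_eq_sum_card_smul [Fintype α] {M : Type*} [AddCommMonoid M]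
    (s : Finset α) (f : α → M) :
    ∑ w ∈ s ×ˢ s, f (w.1 - w.2) = ∑ d, #{w ∈ s ×ˢ s | w.1 - w.2 = d} • f d := by
  rw [← sum_fiberwise (s ×ˢ s) (fun w => w.1 - w.2)]
  refine sum_congr rfl fun d _ => ?_
  rw [sum_congr rfl fun w hw => by rw [(mem_filter.1 hw).2], sum_const]

theorem addEnergy_eq_sum_card_sub_eq_mul [Fintype α] (s t : Finset α) :
    E[s, t] = ∑ d, #{x ∈ s ×ˢ s | x.1 - x.2 = d} * #{y ∈ t ×ˢ t | y.2 - y.1 = d} := by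
  rw [addEnergy, card_eq_sum_card_fiberwise (f := fun z => z.1.1 - z.1.2) (t := univ)
    (fun _ _ => mem_coe.2 (mem_univ _))]
  refine sum_congr rfl fun d _ => ?_
  rw [← card_product, filter_filter]
  congr 1
  ext ⟨⟨a, b⟩, c, e⟩
  simp only [mem_filter, mem_product]
  grind

theorem addEnergy_self_eq_sum_card_sub_eq_sq [Fintype α] (s : Finset α) :
    E[s] = ∑ d, #{x ∈ s ×ˢ s | x.1 - x.2 = d} ^ 2 := by
  rw [addEnergy_eq_sum_card_sub_eq_mul]
  refine sum_congr rfl fun d _ => ?_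
  rw [sq]
  congr 1
  refine card_equiv (Equiv.prodComm α α) fun w => ?_
  simp [and_comm]

end Finset

namespace AddChar

variable {R : Type*} [CommRing R] [Fintype R]

noncomputable def charSum (ψ : AddChar R ℂ) (Z : Finset R) (d : R) : ℂ := ∑ z ∈ Z, ψ (d * z)

theorem sq_norm_charSum (ψ : AddChar R ℂ) (Z : Finset R) (d : R) :
    (‖charSum ψ Z d‖ : ℂ) ^ 2 = ∑ w ∈ Z ×ˢ Z, ψ (d * (w.1 - w.2)) := by
  rw [← Complex.mul_conj', charSum, map_sum, sum_mul_sum, sum_product]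
  refine sum_congr rfl fun a _ => sum_congr rfl fun b _ => ?_
  rw [← map_neg_eq_conj, ← map_add_eq_mul, mul_sub, sub_eq_add_neg]

theorem sum_sq_norm_charSum_sub_comm (ψ : AddChar R ℂ) (X Y : Finset R) :
    ∑ w ∈ Y ×ˢ Y, ‖charSum ψ X (w.1 - w.2)‖ ^ 2 =
      ∑ v ∈ X ×ˢ X, ‖charSum ψ Y (v.1 - v.2)‖ ^ 2 := by
  apply Complex.ofReal_injective
  push_cast
  simp_rw [sq_norm_charSum]
  rw [sum_comm]
  simp_rw [mul_comm]

theorem sum_norm_charSum_pow_four [DecidableEq R] {ψ : AddChar R ℂ} (hψ : ψ.IsPrimitive)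
    (Z : Finset R) :
    ∑ d, ‖charSum ψ Z d‖ ^ 4 = Fintype.card R * E[Z] := by
  apply Complex.ofReal_injective
  push_cast
  have hexpand : ∀ d, (‖charSum ψ Z d‖ : ℂ) ^ 4 =
      ∑ u ∈ (Z ×ˢ Z) ×ˢ Z ×ˢ Z, ψ (d * ((u.1.1 + u.2.1) - (u.1.2 + u.2.2))) := by
    intro d
    rw [pow_mul' _ 2 2, sq_norm_charSum, sq, sum_mul_sum, ← sum_product']
    refine sum_congr rfl fun u _ => ?_
    rw [← map_add_eq_mul, ← mul_add, sub_add_sub_comm]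
  simp_rw [hexpand]
  rw [sum_comm]
  simp_rw [sum_mulShift _ hψ, sub_eq_zero]
  rw [← Nat.cast_sum, sum_ite, sum_const_zero, add_zero, sum_const, smul_eq_mul, mul_comm,
    Finset.addEnergy]
  push_cast
  rfl

theorem sum_sq_norm_charSum_le_sum_norm_charSum_sub (ψ : AddChar R ℂ) (X Y : Finset R) :
    ∑ x ∈ X, ‖charSum ψ Y x‖ ^ 2 ≤ ∑ w ∈ Y ×ˢ Y, ‖charSum ψ X (w.1 - w.2)‖ := by
  have hexpand : ((∑ x ∈ X, ‖charSum ψ Y x‖ ^ 2 : ℝ) : ℂ) =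
      ∑ w ∈ Y ×ˢ Y, charSum ψ X (w.1 - w.2) := by
    push_cast
    simp_rw [sq_norm_charSum]
    rw [sum_comm]
    simp_rw [charSum, mul_comm]
  calc ∑ x ∈ X, ‖charSum ψ Y x‖ ^ 2
      = ‖((∑ x ∈ X, ‖charSum ψ Y x‖ ^ 2 : ℝ) : ℂ)‖ := (Complex.norm_of_nonneg (by positivity)).symm
    _ = ‖∑ w ∈ Y ×ˢ Y, charSum ψ X (w.1 - w.2)‖ := by rw [hexpand]
    _ ≤ ∑ w ∈ Y ×ˢ Y, ‖charSum ψ X (w.1 - w.2)‖ := norm_sum_le _ _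

theorem sq_sum_sq_norm_charSum_sub_le [DecidableEq R] {ψ : AddChar R ℂ} (hψ : ψ.IsPrimitive)
    (X Y : Finset R) :
    (∑ v ∈ X ×ˢ X, ‖charSum ψ Y (v.1 - v.2)‖ ^ 2) ^ 2 ≤ Fintype.card R * E[X] * E[Y] := by
  rw [Finset.sum_comp_sub_eq_sum_card_smul X fun d => ‖charSum ψ Y d‖ ^ 2]
  simp only [nsmul_eq_mul]
  calc (∑ d, (#{v ∈ X ×ˢ X | v.1 - v.2 = d} : ℝ) * ‖charSum ψ Y d‖ ^ 2) ^ 2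
      ≤ (∑ d, (#{v ∈ X ×ˢ X | v.1 - v.2 = d} : ℝ) ^ 2) * ∑ d, (‖charSum ψ Y d‖ ^ 2) ^ 2 :=
        sum_mul_sq_le_sq_mul_sq _ _ _
    _ = E[X] * (Fintype.card R * E[Y]) := by
        rw [Finset.addEnergy_self_eq_sum_card_sub_eq_sq, ← sum_norm_charSum_pow_four hψ]
        push_cast
        simp_rw [← pow_mul]
    _ = Fintype.card R * E[X] * E[Y] := by ring

theorem norm_sum_sum_mul_pow_eight_le [DecidableEq R] {ψ : AddChar R ℂ}
    (hψ : ψ.IsPrimitive) (X Y : Finset R) :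
    ‖∑ x ∈ X, ∑ y ∈ Y, ψ (x * y)‖ ^ 8 ≤
      Fintype.card R * (#X : ℝ) ^ 4 * (#Y : ℝ) ^ 4 * E[X] * E[Y] := by
  set B := ∑ w ∈ Y ×ˢ Y, ‖charSum ψ X (w.1 - w.2)‖
  set C := ∑ w ∈ Y ×ˢ Y, ‖charSum ψ X (w.1 - w.2)‖ ^ 2
  have hS : ‖∑ x ∈ X, charSum ψ Y x‖ ^ 2 ≤ #X * B :=
    calc ‖∑ x ∈ X, charSum ψ Y x‖ ^ 2 ≤ (∑ x ∈ X, ‖charSum ψ Y x‖) ^ 2 := by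
          gcongr; exact norm_sum_le _ _
      _ ≤ #X * ∑ x ∈ X, ‖charSum ψ Y x‖ ^ 2 := sq_sum_le_card_mul_sum_sq
      _ ≤ #X * B := by gcongr; exact sum_sq_norm_charSum_le_sum_norm_charSum_sub ψ X Y
  have hB : B ^ 2 ≤ #Y ^ 2 * C := by
    simpa only [card_product, Nat.cast_mul, Nat.cast_pow, ← sq] using
      sq_sum_le_card_mul_sum_sq (s := Y ×ˢ Y) (f := fun w => ‖charSum ψ X (w.1 - w.2)‖)
  have hC : C ^ 2 ≤ Fintype.card R * E[X] * E[Y] := by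
    have := sq_sum_sq_norm_charSum_sub_le hψ X Y
    rwa [← sum_sq_norm_charSum_sub_comm] at this
  calc ‖∑ x ∈ X, charSum ψ Y x‖ ^ 8 = (‖∑ x ∈ X, charSum ψ Y x‖ ^ 2) ^ 4 := by ring
    _ ≤ (#X * B) ^ 4 := by gcongr
    _ = #X ^ 4 * (B ^ 2) ^ 2 := by ring
    _ ≤ #X ^ 4 * (#Y ^ 2 * C) ^ 2 := by gcongr
    _ = #X ^ 4 * #Y ^ 4 * C ^ 2 := by ring
    _ ≤ #X ^ 4 * #Y ^ 4 * (Fintype.card R * E[X] * E[Y]) := by gcongr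
    _ = Fintype.card R * (#X : ℝ) ^ 4 * (#Y : ℝ) ^ 4 * E[X] * E[Y] := by ring

end AddChar

noncomputable def canonAddChar (p : ℕ) [NeZero p] (F : Type*) [Field F] [Algebra (ZMod p) F] :
    AddChar F ℂ :=
  ZMod.stdAddChar.compAddMonoidHom (Algebra.trace (ZMod p) F).toAddMonoidHom

theorem canonAddChar_apply (p : ℕ) [NeZero p] (F : Type*) [Field F] [Fintype F]
    [Algebra (ZMod p) F] (x : F) : canonAddChar p F x = canonChar p F x := by
  rw [canonAddChar, AddChar.compAddMonoidHom_apply, ZMod.stdAddChar_apply, ZMod.toCircle_apply]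
  rfl

theorem isPrimitive_canonAddChar (p : ℕ) [Fact p.Prime] (F : Type*) [Field F] [Finite F]
    [Algebra (ZMod p) F] : (canonAddChar p F).IsPrimitive := by
  refine AddChar.IsPrimitive.of_ne_one (AddChar.ne_one_iff.2 ?_)
  obtain ⟨a, ha⟩ := Algebra.trace_surjective (ZMod p) F 1
  refine ⟨a, fun h => one_ne_zero (ha.symm.trans (ZMod.injective_stdAddChar ?_))⟩
  exact h.trans (AddChar.map_zero_eq_one _).symm

theorem bilinear_char_sum_eighth_power
    (p : ℕ) (hp : p.Prime) (F : Type*) [Field F] [Fintype F]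
    [Algebra (ZMod p) F] [DecidableEq F] (X Y : Finset F) :
    ‖∑ x ∈ X, ∑ y ∈ Y, canonChar p F (x * y)‖ ^ 8 ≤
      (Fintype.card F : ℝ) * (X.card : ℝ) ^ 4 * (Y.card : ℝ) ^ 4 *
        (addEnergy X : ℝ) * (addEnergy Y : ℝ) := by
  have : Fact p.Prime := ⟨hp⟩
  simp only [← canonAddChar_apply]
  exact AddChar.norm_sum_sum_mul_pow_eight_le (isPrimitive_canonAddChar p F) X Y
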